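/- Let v, f : ℝ × ℝ → ℝ, (x,t) ↦ v(x,t), f(x,t), be infinitely differentiable functions such that ∂²f/∂x² = −v²/2 and ∂²f/∂x∂t = (1/8)(3v⁴ + (∂v/∂x)² − 2v ∂²v/∂x²) everywhere. Then v·(∂v/∂t + (3/2)v² ∂v/∂x − (1/4)∂³v/∂x³) = 0 everywhere; in particular, if v(x,t) ≠ 0 for all (x,t), then v satisfies the modified KdV equation ∂v/∂t = −(3/2)v² ∂v/∂x + (1/4)∂³v/∂x³. -/

import Mathlib

open Function

noncomputable def DXp (g : ℝ → ℝ → ℝ) : ℝ → ℝ → ℝ :=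
  fun x t => fderiv ℝ (uncurry g) (x, t) (1, 0)

noncomputable def DTp (g : ℝ → ℝ → ℝ) : ℝ → ℝ → ℝ :=
  fun x t => fderiv ℝ (uncurry g) (x, t) (0, 1)

lemma hasDerivAt_DXp {g : ℝ → ℝ → ℝ} (hg : ContDiff ℝ (⊤ : ℕ∞) (uncurry g)) (x t : ℝ) :
    HasDerivAt (fun y => g y t) (DXp g x t) x := by
  have h := (hg.differentiable (by simp) (x, t)).hasFDerivAt
  have hl : HasDerivAt (fun y : ℝ => (y, t)) ((1 : ℝ), (0 : ℝ)) x :=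
    HasDerivAt.prodMk (hasDerivAt_id x) (hasDerivAt_const x t)
  exact h.comp_hasDerivAt x hl

lemma hasDerivAt_DTp {g : ℝ → ℝ → ℝ} (hg : ContDiff ℝ (⊤ : ℕ∞) (uncurry g)) (x t : ℝ) :
    HasDerivAt (fun s => g x s) (DTp g x t) t := by
  have h := (hg.differentiable (by simp) (x, t)).hasFDerivAt
  have hl : HasDerivAt (fun s : ℝ => (x, s)) ((0 : ℝ), (1 : ℝ)) t :=
    HasDerivAt.prodMk (hasDerivAt_const t x) (hasDerivAt_id t)
  exact h.comp_hasDerivAt t hl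

lemma contDiff_DXp {g : ℝ → ℝ → ℝ} (hg : ContDiff ℝ (⊤ : ℕ∞) (uncurry g)) :
    ContDiff ℝ (⊤ : ℕ∞) (uncurry (DXp g)) := by
  have h1 : ContDiff ℝ (⊤ : ℕ∞) (fderiv ℝ (uncurry g)) := hg.fderiv_right (by simp)
  have h2 := h1.clm_apply (contDiff_const (c := ((1 : ℝ), (0 : ℝ))))
  exact h2

lemma contDiff_DTp {g : ℝ → ℝ → ℝ} (hg : ContDiff ℝ (⊤ : ℕ∞) (uncurry g)) :
    ContDiff ℝ (⊤ : ℕ∞) (uncurry (DTp g)) := by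
  have h1 : ContDiff ℝ (⊤ : ℕ∞) (fderiv ℝ (uncurry g)) := hg.fderiv_right (by simp)
  have h2 := h1.clm_apply (contDiff_const (c := ((0 : ℝ), (1 : ℝ))))
  exact h2

lemma clairaut {g : ℝ → ℝ → ℝ} (hg : ContDiff ℝ (⊤ : ℕ∞) (uncurry g)) (x t : ℝ) :
    DTp (DXp g) x t = DXp (DTp g) x t := by
  set F := uncurry g
  have hF' : ∀ y, HasFDerivAt F (fderiv ℝ F y) y :=
    fun y => (hg.differentiable (by simp) y).hasFDerivAt
  have hd : Differentiable ℝ (fderiv ℝ F) :=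
    (hg.fderiv_right (m := (⊤ : ℕ∞)) (by simp)).differentiable (by simp)
  have hF'' : HasFDerivAt (fderiv ℝ F) (fderiv ℝ (fderiv ℝ F) (x, t)) (x, t) :=
    (hd (x, t)).hasFDerivAt
  have symm := second_derivative_symmetric hF' hF'' ((1 : ℝ), (0 : ℝ)) ((0 : ℝ), (1 : ℝ))
  have key : ∀ w : ℝ × ℝ, HasFDerivAt (fun p => fderiv ℝ F p w)
      ((ContinuousLinearMap.apply ℝ ℝ w).comp (fderiv ℝ (fderiv ℝ F) (x, t))) (x, t) :=
    fun w => ((ContinuousLinearMap.apply ℝ ℝ w).hasFDerivAt).comp (x, t) hF''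
  have e1 : uncurry (DXp g) = fun p => fderiv ℝ F p ((1 : ℝ), (0 : ℝ)) := by
    ext p; simp [DXp, uncurry, F]
  have e2 : uncurry (DTp g) = fun p => fderiv ℝ F p ((0 : ℝ), (1 : ℝ)) := by
    ext p; simp [DTp, uncurry, F]
  have v1 : DTp (DXp g) x t
      = fderiv ℝ (fderiv ℝ F) (x, t) ((0 : ℝ), (1 : ℝ)) ((1 : ℝ), (0 : ℝ)) := by
    show fderiv ℝ (uncurry (DXp g)) (x, t) _ = _
    rw [e1, (key ((1 : ℝ), (0 : ℝ))).fderiv]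
    rfl
  have v2 : DXp (DTp g) x t
      = fderiv ℝ (fderiv ℝ F) (x, t) ((1 : ℝ), (0 : ℝ)) ((0 : ℝ), (1 : ℝ)) := by
    show fderiv ℝ (uncurry (DTp g)) (x, t) _ = _
    rw [e2, (key ((0 : ℝ), (1 : ℝ))).fderiv]
    rfl
  rw [v1, v2, symm]

/-- if `f_xx = −v²/2` and `f_xt = (1/8)(3v⁴ + (v_x)² − 2vv_xx)`, then
`v·(v_t + (3/2)v²v_x − (1/4)v_xxx) = 0`; in particular if `v` never vanishes then `v`
satisfies the modified KdV equation `v_t = −(3/2)v²v_x + (1/4)v_xxx`. -/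
theorem stmt_10 (v f : ℝ → ℝ → ℝ)
    (hv : ContDiff ℝ (⊤ : ℕ∞) (Function.uncurry v)) (hf : ContDiff ℝ (⊤ : ℕ∞) (Function.uncurry f))
    (h1 : ∀ x t : ℝ, deriv (deriv (fun y => f y t)) x = -(v x t) ^ 2 / 2)
    (h2 : ∀ x t : ℝ, deriv (fun s => deriv (fun y => f y s) x) t
      = (1 / 8) * (3 * (v x t) ^ 4 + (deriv (fun y => v y t) x) ^ 2
          - 2 * v x t * deriv (deriv (fun y => v y t)) x)) :
    (∀ x t : ℝ, v x t * (deriv (fun s => v x s) t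
        + (3 / 2) * (v x t) ^ 2 * deriv (fun y => v y t) x
        - (1 / 4) * deriv (deriv (deriv (fun y => v y t))) x) = 0)
    ∧ ((∀ x t : ℝ, v x t ≠ 0) →
      ∀ x t : ℝ, deriv (fun s => v x s) t
        = -(3 / 2) * (v x t) ^ 2 * deriv (fun y => v y t) x
          + (1 / 4) * deriv (deriv (deriv (fun y => v y t))) x) := by
  have hvx := contDiff_DXp hv
  have hvxx := contDiff_DXp hvx
  have hfx := contDiff_DXp hf
  have hfxx := contDiff_DXp hfx
  have hfxt := contDiff_DTp hfx
  -- rewriting lemmas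
  have rv1 : ∀ t : ℝ, deriv (fun y => v y t) = fun y => DXp v y t :=
    fun t => funext fun x => (hasDerivAt_DXp hv x t).deriv
  have rv2 : ∀ t : ℝ, deriv (fun y => DXp v y t) = fun y => DXp (DXp v) y t :=
    fun t => funext fun x => (hasDerivAt_DXp hvx x t).deriv
  have rv3 : ∀ x t : ℝ, deriv (deriv (deriv (fun y => v y t))) x = DXp (DXp (DXp v)) x t := by
    intro x t
    rw [rv1, rv2]
    exact (hasDerivAt_DXp hvxx x t).deriv
  have rv2' : ∀ x t : ℝ, deriv (deriv (fun y => v y t)) x = DXp (DXp v) x t := by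
    intro x t
    rw [rv1]
    exact (hasDerivAt_DXp hvx x t).deriv
  have rvt : ∀ x t : ℝ, deriv (fun s => v x s) t = DTp v x t :=
    fun x t => (hasDerivAt_DTp hv x t).deriv
  have rv1pt : ∀ x t : ℝ, deriv (fun y => v y t) x = DXp v x t :=
    fun x t => (hasDerivAt_DXp hv x t).deriv
  have rf1 : ∀ t : ℝ, deriv (fun y => f y t) = fun y => DXp f y t :=
    fun t => funext fun x => (hasDerivAt_DXp hf x t).deriv
  -- hypotheses in DXp/DTp form
  have h1' : ∀ x t : ℝ, DXp (DXp f) x t = -(v x t) ^ 2 / 2 := by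
    intro x t
    have := h1 x t
    rw [rf1, (hasDerivAt_DXp hfx x t).deriv] at this
    exact this
  have h2' : ∀ x t : ℝ, DTp (DXp f) x t
      = (1 / 8) * (3 * (v x t) ^ 4 + (DXp v x t) ^ 2
          - 2 * v x t * DXp (DXp v) x t) := by
    intro x t
    have h := h2 x t
    have e : (fun s => deriv (fun y => f y s) x) = fun s => DXp f x s := by
      funext s; rw [rf1]
    rw [e, (hasDerivAt_DTp hfx x t).deriv] at h
    rw [rv2' x t, rv1pt x t] at h
    exact h
  -- key equality via Clairaut
  have key : ∀ x t : ℝ, -(v x t * DTp v x t)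
      = (3 / 2) * (v x t) ^ 3 * DXp v x t
        - (1 / 4) * v x t * DXp (DXp (DXp v)) x t := by
    intro x t
    -- step A : DTp (DXp (DXp f)) x t = -(v x t * DTp v x t)
    have hL := hasDerivAt_DTp hfxx x t
    have heqA : (fun s => DXp (DXp f) x s) = fun s => -(v x s) ^ 2 / 2 := by
      funext s; exact h1' x s
    rw [heqA] at hL
    have hR : HasDerivAt (fun s => -(v x s) ^ 2 / 2)
        (-((2 : ℕ) * (v x t) ^ (2 - 1) * DTp v x t) / 2) t :=
      (((hasDerivAt_DTp hv x t).pow 2).neg).div_const 2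
    have stepA : DTp (DXp (DXp f)) x t = -(v x t * DTp v x t) := by
      have := hL.unique hR
      rw [this]; push_cast; ring
    -- step B : DXp (DTp (DXp f)) x t = ...
    have hL2 := hasDerivAt_DXp hfxt x t
    have heqB : (fun y => DTp (DXp f) y t)
        = fun y => (1 / 8) * (3 * (v y t) ^ 4 + (DXp v y t) ^ 2
            - 2 * v y t * DXp (DXp v) y t) := by
      funext y; exact h2' y t
    rw [heqB] at hL2
    have d0 := hasDerivAt_DXp hv x t
    have d1 := hasDerivAt_DXp hvx x t
    have d2 := hasDerivAt_DXp hvxx x t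
    have hR2 : HasDerivAt (fun y => (1 / 8) * (3 * (v y t) ^ 4 + (DXp v y t) ^ 2
            - 2 * v y t * DXp (DXp v) y t))
        ((1 / 8) * ((3 * ((4 : ℕ) * (v x t) ^ (4 - 1) * DXp v x t))
            + ((2 : ℕ) * (DXp v x t) ^ (2 - 1) * DXp (DXp v) x t)
            - (2 * DXp v x t * DXp (DXp v) x t
                + 2 * v x t * DXp (DXp (DXp v)) x t))) x := by
      exact ((((d0.pow 4).const_mul 3).add (d1.pow 2)).sub
        ((d0.const_mul 2).mul d2)).const_mul (1 / 8)
    have stepB := hL2.unique hR2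
    have hcl := clairaut hfx x t
    rw [stepA] at hcl
    rw [stepB] at hcl
    rw [hcl]; push_cast; ring
  have hmain : ∀ x t : ℝ, v x t * (DTp v x t
      + (3 / 2) * (v x t) ^ 2 * DXp v x t
      - (1 / 4) * DXp (DXp (DXp v)) x t) = 0 := by
    intro x t
    linear_combination -key x t
  constructor
  · intro x t
    rw [rvt, rv3, rv1pt]
    exact hmain x t
  · intro hne x t
    rw [rvt, rv3, rv1pt]
    have h := hmain x t
    have h0 := mul_eq_zero.mp h
    rcases h0 with h0 | h0
    · exact absurd h0 (hne x t)
    · linarith
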